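/- Let n ≥ 9, m = ⌊√n⌋, S = {i² : 0 ≤ i ≤ m} ∪ {2}, and P(x) = 2·(−1)^{n−m−1}·(m!²/n!)·∏_{i ∈ [n]∖S} (x − i). Then ‖P‖₁ := ∑_{i=0}^{n} C(n,i)·|P(i)| < 27. -/

import Mathlib

/-!
If `P = c ∏_{i ∈ [n] ∖ S} (x - i)` with `S ⊆ [n]`, then `C(n, j) ∏_{i ∈ [n], i ≠ j} |j - i| = n!`
gives `C(n, j) |P(j)| = |c| n! / ∏_{i ∈ S ∖ {j}} |j - i|` for `j ∈ S`, and `P` vanishes on `[n] ∖ S`;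
so `‖P‖₁` only depends on the nodes `S`. Here `S = {k² : k ≤ m} ∪ {2}` and `|c| n! = 2 (m!)²`.
The node `0` contributes exactly `1`; the node `2` contributes `(m!)² / ∏_{k=2}^m (k² - 2) ≤ 6`;
the node `k²`, `k ≥ 1`, contributes `4 (m!)² / (|k² - 2| (m - k)! (m + k)!) ≤ 4 / |k² - 2| ≤ 8 / k²`,
since `(m!)² ≤ (m - k)! (m + k)!` (the central binomial coefficient is the largest one).
Hence `‖P‖₁ ≤ 1 + 6 + 8 ∑ 1 / k² ≤ 23`.
-/

open Finset Nat

theorem prod_abs_sub_range_sdiff_singleton {j n : ℕ} (h : j ≤ n) :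
    ∏ i ∈ range (n + 1) \ {j}, |(j : ℝ) - i| = j ! * (n - j)! := by
  have hsplit : range (n + 1) \ {j} = range j ∪ Ico (j + 1) (n + 1) := by
    ext i; simp only [mem_sdiff, mem_range, mem_singleton, mem_union, mem_Ico]; omega
  have hdisj : Disjoint (range j) (Ico (j + 1) (n + 1)) := by
    simp only [disjoint_left, mem_range, mem_Ico]; omega
  have hlow : ∏ i ∈ range j, |(j : ℝ) - i| = j ! := by
    rw [← descFactorial_self, descFactorial_eq_prod_range, Nat.cast_prod]
    refine prod_congr rfl fun i hi => ?_
    rw [Nat.cast_sub (mem_range.mp hi).le, abs_of_nonneg (by simpa using (mem_range.mp hi).le)]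
  have hhigh : ∏ i ∈ Ico (j + 1) (n + 1), |(j : ℝ) - i| = (n - j)! := by
    rw [prod_Ico_eq_prod_range, show n + 1 - (j + 1) = n - j by omega,
      factorial_eq_prod_range_add_one, Nat.cast_prod]
    refine prod_congr rfl fun i _ => ?_
    rw [abs_sub_comm, abs_of_nonneg (by push_cast; linarith)]
    push_cast; ring
  rw [hsplit, prod_union hdisj, hlow, hhigh]

def lagrangeWeight (S : Finset ℕ) (j : ℕ) : ℝ := ∏ i ∈ S \ {j}, |(j : ℝ) - i|

theorem lagrangeWeight_pos (S : Finset ℕ) (j : ℕ) : 0 < lagrangeWeight S j :=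
  prod_pos fun i hi => abs_pos.mpr <| sub_ne_zero.mpr <| by
    exact_mod_cast fun h : j = i => (mem_sdiff.mp hi).2 (mem_singleton.mpr h.symm)

theorem choose_mul_prod_abs_sub_mul_lagrangeWeight {n j : ℕ} {S : Finset ℕ}
    (hS : S ⊆ range (n + 1)) (hj : j ∈ S) :
    n.choose j * (∏ i ∈ range (n + 1) \ S, |(j : ℝ) - i|) * lagrangeWeight S j = n ! := by
  have hjn : j ≤ n := Nat.lt_succ_iff.mp (mem_range.mp (hS hj))
  rw [lagrangeWeight, mul_assoc, ← prod_union (sdiff_disjoint.mono_right sdiff_subset),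
    sdiff_union_sdiff_cancel hS (singleton_subset_iff.mpr hj),
    prod_abs_sub_range_sdiff_singleton hjn, ← mul_assoc]
  exact_mod_cast choose_mul_factorial_mul_factorial hjn

theorem sum_choose_mul_abs_eq_sum_div_lagrangeWeight {n : ℕ} {S : Finset ℕ}
    (hS : S ⊆ range (n + 1)) (c : ℝ) :
    ∑ i ∈ range (n + 1), (n.choose i : ℝ) * |c * ∏ k ∈ range (n + 1) \ S, ((i : ℝ) - k)| =
      ∑ j ∈ S, |c| * n ! / lagrangeWeight S j := by
  rw [← sum_subset hS fun i hi hiS => by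
    rw [prod_eq_zero (mem_sdiff.mpr ⟨hi, hiS⟩) (sub_self _), mul_zero, abs_zero, mul_zero]]
  refine sum_congr rfl fun j hj => ?_
  rw [eq_div_iff (lagrangeWeight_pos S j).ne', ← choose_mul_prod_abs_sub_mul_lagrangeWeight hS hj,
    abs_mul, abs_prod]
  ring

def sqNodes (m : ℕ) : Finset ℕ := (range (m + 1)).image (fun i => i ^ 2) ∪ {2}

theorem sq_ne_two (k : ℕ) : k ^ 2 ≠ 2 :=
  fun h => Nat.not_exists_sq' (m := 1) (by norm_num) (by norm_num) ⟨k, h⟩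

theorem sqNodes_subset_range {m n : ℕ} (hm : m ^ 2 ≤ n) (hn : 2 ≤ n) :
    sqNodes m ⊆ range (n + 1) := by
  intro i hi
  simp only [sqNodes, mem_union, mem_image, mem_range, mem_singleton] at hi ⊢
  rcases hi with ⟨k, hk, rfl⟩ | rfl
  · have := Nat.pow_le_pow_left (Nat.lt_succ_iff.mp hk) 2
    omega
  · omega

theorem two_notMem_image_sq (s : Finset ℕ) : 2 ∉ s.image (fun i => i ^ 2) := by
  simpa using fun k _ => sq_ne_two k

theorem sum_sqNodes {M : Type*} [AddCommMonoid M] (m : ℕ) (f : ℕ → M) :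
    ∑ j ∈ sqNodes m, f j = ∑ k ∈ range (m + 1), f (k ^ 2) + f 2 := by
  rw [sqNodes, sum_union (disjoint_singleton_right.mpr (two_notMem_image_sq _)), sum_singleton,
    sum_image fun x _ y _ h => Nat.pow_left_injective two_ne_zero h]

theorem lagrangeWeight_sqNodes_sq (m k : ℕ) :
    lagrangeWeight (sqNodes m) (k ^ 2) =
      |(k : ℝ) ^ 2 - 2| * ∏ l ∈ range (m + 1) \ {k}, |(k : ℝ) ^ 2 - l ^ 2| := by
  have hinj : Function.Injective (fun i : ℕ => i ^ 2) := Nat.pow_left_injective two_ne_zero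
  have hnodes : sqNodes m \ {k ^ 2} = (range (m + 1) \ {k}).image (fun i => i ^ 2) ∪ {2} := by
    rw [sqNodes, union_sdiff_distrib, image_sdiff _ _ hinj, image_singleton,
      sdiff_singleton_eq_erase (k ^ 2) {2}, erase_eq_of_notMem (by simpa using sq_ne_two k)]
  rw [lagrangeWeight, hnodes, prod_union (disjoint_singleton_right.mpr (two_notMem_image_sq _)),
    prod_image hinj.injOn, prod_singleton, mul_comm]
  push_cast
  rfl

theorem lagrangeWeight_sqNodes_zero (m : ℕ) : lagrangeWeight (sqNodes m) 0 = 2 * m ! ^ 2 := by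
  have h := lagrangeWeight_sqNodes_sq m 0
  rw [zero_pow two_ne_zero] at h
  have hfac := prod_abs_sub_range_sdiff_singleton (Nat.zero_le m)
  simp only [Nat.cast_zero, zero_sub, abs_neg, factorial_zero, Nat.cast_one, one_mul,
    Nat.sub_zero] at h hfac
  rw [h, ← hfac, ← prod_pow]
  norm_num [sq_abs]

theorem lagrangeWeight_sqNodes_two {m : ℕ} (hm : 1 ≤ m) :
    lagrangeWeight (sqNodes m) 2 = 2 * ∏ k ∈ Icc 2 m, ((k : ℝ) ^ 2 - 2) := by
  have hnodes : sqNodes m \ {2} = (range (m + 1)).image (fun i => i ^ 2) := by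
    rw [sqNodes, union_sdiff_cancel_right (disjoint_singleton_right.mpr (two_notMem_image_sq _))]
  rw [lagrangeWeight, hnodes, prod_image (Nat.pow_left_injective two_ne_zero).injOn, range_eq_Ico,
    ← prod_Ico_consecutive _ (Nat.zero_le 2) (by omega : 2 ≤ m + 1), ← Ico_add_one_right_eq_Icc]
  congr 1
  · norm_num [← range_eq_Ico, prod_range_succ]
  · refine prod_congr rfl fun k hk => ?_
    have : (4 : ℝ) ≤ (k : ℝ) ^ 2 := by
      have : (2 : ℝ) ≤ k := by exact_mod_cast (mem_Ico.mp hk).1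
      nlinarith
    rw [abs_sub_comm, abs_of_nonneg (by push_cast; linarith)]
    push_cast; ring

theorem two_mul_factorial_mul_prod_add {k m : ℕ} (hk : 1 ≤ k) (hkm : k ≤ m) :
    2 * k ! * ∏ l ∈ range (m + 1) \ {k}, (k + l) = (m + k)! := by
  obtain ⟨t, rfl⟩ : ∃ t, k = t + 1 := ⟨k - 1, by omega⟩
  have hasc := factorial_mul_ascFactorial t (m + 1)
  rw [ascFactorial_eq_prod_range, ← prod_sdiff (singleton_subset_iff.mpr
    (mem_range.mpr (by omega : t + 1 < m + 1))), prod_singleton] at hasc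
  rw [show m + (t + 1) = t + (m + 1) by omega, ← hasc, factorial_succ]
  ring

theorem two_mul_prod_abs_sq_sub_sq {k m : ℕ} (hk : 1 ≤ k) (hkm : k ≤ m) :
    2 * ∏ l ∈ range (m + 1) \ {k}, |(k : ℝ) ^ 2 - l ^ 2| = (m - k)! * (m + k)! := by
  have hfactor : ∀ l : ℕ, |(k : ℝ) ^ 2 - l ^ 2| = |(k : ℝ) - l| * ((k + l : ℕ) : ℝ) := fun l => by
    rw [show (k : ℝ) ^ 2 - l ^ 2 = (k - l) * (k + l) by ring, abs_mul,
      abs_of_nonneg (by positivity : (0 : ℝ) ≤ k + l)]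
    push_cast; rfl
  simp only [hfactor, prod_mul_distrib, prod_abs_sub_range_sdiff_singleton hkm]
  rw [← two_mul_factorial_mul_prod_add hk hkm]
  push_cast; ring

theorem factorial_mul_factorial_le_factorial_sub_mul_factorial_add {k m : ℕ} (h : k ≤ m) :
    m ! * m ! ≤ (m - k)! * (m + k)! := by
  have hmid := choose_le_middle (m - k) (2 * m)
  rw [show 2 * m / 2 = m by omega] at hmid
  have h1 := choose_mul_factorial_mul_factorial (show m - k ≤ 2 * m by omega)
  have h2 := choose_mul_factorial_mul_factorial (show m ≤ 2 * m by omega)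
  rw [show 2 * m - (m - k) = m + k by omega] at h1
  rw [show 2 * m - m = m by omega] at h2
  refine Nat.le_of_mul_le_mul_left ?_ (choose_pos (by omega : m - k ≤ 2 * m))
  calc (2 * m).choose (m - k) * (m ! * m !) ≤ (2 * m).choose m * (m ! * m !) :=
        Nat.mul_le_mul_right _ hmid
    _ = (2 * m).choose (m - k) * ((m - k)! * (m + k)!) := by rw [← mul_assoc, h2, ← h1, mul_assoc]

/-- The factor `(m + 1) / (m - 1)` makes the induction close: `k² / (k² - 2)` is at most
`(k - 1) k / ((k - 2) (k + 1))`, the ratio of consecutive values of `(k - 1) / (k + 1)`. -/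
theorem succ_mul_factorial_sq_le_prod_sq_sub_two {m : ℕ} (hm : 2 ≤ m) :
    (m + 1) * (m ! : ℝ) ^ 2 ≤ 6 * (m - 1) * ∏ k ∈ Icc 2 m, ((k : ℝ) ^ 2 - 2) := by
  induction m, hm using Nat.le_induction with
  | base => norm_num [factorial]
  | succ m hm ih =>
    have hQ : 0 ≤ ∏ k ∈ Icc 2 m, ((k : ℝ) ^ 2 - 2) := prod_nonneg fun k hk => by
      have : (2 : ℝ) ≤ k := by exact_mod_cast (mem_Icc.mp hk).1
      nlinarith
    have hmR : (2 : ℝ) ≤ m := by exact_mod_cast hm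
    rw [← insert_Icc_right_eq_Icc_add_one (by omega), prod_insert (by simp), factorial_succ]
    push_cast
    nlinarith [mul_le_mul_of_nonneg_left ih (by positivity : (0 : ℝ) ≤ (m + 2) * (m + 1))]

theorem factorial_sq_le_six_mul_prod_sq_sub_two {m : ℕ} (hm : 2 ≤ m) :
    (m ! : ℝ) ^ 2 ≤ 6 * ∏ k ∈ Icc 2 m, ((k : ℝ) ^ 2 - 2) := by
  have h := succ_mul_factorial_sq_le_prod_sq_sub_two hm
  have hmR : (2 : ℝ) ≤ m := by exact_mod_cast hm
  nlinarith [sq_nonneg (m ! : ℝ)]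

theorem sum_range_inv_succ_sq_le_two (m : ℕ) : ∑ k ∈ range m, ((k + 1 : ℕ) ^ 2 : ℝ)⁻¹ ≤ 2 := by
  have h := sum_Ioo_inv_sq_le (α := ℝ) 0 (m + 1)
  rw [range_eq_Ico, sum_Ico_add' (fun k : ℕ => ((k : ℝ) ^ 2)⁻¹), Ico_add_one_left_eq_Ioo]
  simpa using h

theorem div_lagrangeWeight_sqNodes_zero (m : ℕ) :
    2 * (m ! : ℝ) ^ 2 / lagrangeWeight (sqNodes m) 0 = 1 := by
  rw [lagrangeWeight_sqNodes_zero, div_self (by positivity)]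

theorem div_lagrangeWeight_sqNodes_two_le {m : ℕ} (hm : 2 ≤ m) :
    2 * (m ! : ℝ) ^ 2 / lagrangeWeight (sqNodes m) 2 ≤ 6 := by
  have hw := lagrangeWeight_pos (sqNodes m) 2
  rw [lagrangeWeight_sqNodes_two (by omega)] at hw ⊢
  rw [div_le_iff₀ hw]
  linarith [factorial_sq_le_six_mul_prod_sq_sub_two hm]

theorem div_lagrangeWeight_sqNodes_sq_le {k m : ℕ} (hk : 1 ≤ k) (hkm : k ≤ m) :
    2 * (m ! : ℝ) ^ 2 / lagrangeWeight (sqNodes m) (k ^ 2) ≤ 8 * ((k : ℝ) ^ 2)⁻¹ := by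
  have hkR : (1 : ℝ) ≤ k := by exact_mod_cast hk
  have hfac : (m ! : ℝ) ^ 2 ≤ 2 * ∏ l ∈ range (m + 1) \ {k}, |(k : ℝ) ^ 2 - l ^ 2| := by
    rw [two_mul_prod_abs_sq_sub_sq hk hkm, sq]
    exact_mod_cast factorial_mul_factorial_le_factorial_sub_mul_factorial_add hkm
  have hdist : (k : ℝ) ^ 2 ≤ 2 * |(k : ℝ) ^ 2 - 2| := by
    rcases eq_or_lt_of_le hk with rfl | h2
    · norm_num
    · have : (2 : ℝ) ≤ k := by exact_mod_cast h2
      rw [abs_of_nonneg (by nlinarith)]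
      nlinarith
  have hw := lagrangeWeight_pos (sqNodes m) (k ^ 2)
  rw [lagrangeWeight_sqNodes_sq] at hw ⊢
  rw [← div_eq_mul_inv, div_le_div_iff₀ hw (by positivity)]
  nlinarith [mul_le_mul hfac hdist (by positivity) (by positivity)]

theorem P_l1_norm_lt (n : ℕ) (hn : 9 ≤ n) :
    let m := Nat.sqrt n
    let S : Finset ℕ := ((Finset.range (m + 1)).image (fun i => i ^ 2)) ∪ {2}
    let P : ℝ → ℝ := fun x =>
      2 * (-1 : ℝ) ^ (n - m - 1) * ((Nat.factorial m : ℝ) ^ 2 / Nat.factorial n) *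
        ∏ i ∈ Finset.range (n + 1) \ S, (x - i)
    ∑ i ∈ Finset.range (n + 1), (n.choose i : ℝ) * |P i| < 27 := by
  intro m S P
  have hm : 2 ≤ m := Nat.le_sqrt.mpr (by omega)
  have hc : |2 * (-1 : ℝ) ^ (n - m - 1) * ((m ! : ℝ) ^ 2 / n !)| * (n ! : ℝ) =
      2 * (m ! : ℝ) ^ 2 := by
    rw [abs_mul, abs_mul, abs_pow, abs_neg, abs_one, one_pow, abs_two, mul_one,
      abs_of_nonneg (by positivity), mul_assoc, div_mul_cancel₀ _ (by positivity)]
  have hsquares : ∑ k ∈ range m, 2 * (m ! : ℝ) ^ 2 / lagrangeWeight (sqNodes m) ((k + 1) ^ 2) ≤ 16 :=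
    calc _ ≤ ∑ k ∈ range m, 8 * ((k + 1 : ℕ) ^ 2 : ℝ)⁻¹ :=
          sum_le_sum fun k hk => div_lagrangeWeight_sqNodes_sq_le (by omega) (by simpa using hk)
      _ ≤ 16 := by rw [← mul_sum]; linarith [sum_range_inv_succ_sq_le_two m]
  calc ∑ i ∈ range (n + 1), (n.choose i : ℝ) * |P i|
      = ∑ j ∈ sqNodes m, 2 * (m ! : ℝ) ^ 2 / lagrangeWeight (sqNodes m) j := by
        rw [← hc]
        exact sum_choose_mul_abs_eq_sum_div_lagrangeWeight
          (sqNodes_subset_range (Nat.sqrt_le' n) (by omega)) _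
    _ = 1 + ∑ k ∈ range m, 2 * (m ! : ℝ) ^ 2 / lagrangeWeight (sqNodes m) ((k + 1) ^ 2) +
          2 * (m ! : ℝ) ^ 2 / lagrangeWeight (sqNodes m) 2 := by
        rw [sum_sqNodes, sum_range_succ', zero_pow two_ne_zero, div_lagrangeWeight_sqNodes_zero]
        ring
    _ < 27 := by linarith [div_lagrangeWeight_sqNodes_two_le hm]
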